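/- arXiv:2409.00697 — 4 statements merged into one kernel-verified Lean document; each statement's English description precedes it below -/
import Mathlib

section
/- Let G be a connected graph on n vertices and let k ∈ {1,…,n}. Then G admits a packing k-coloring if and only if the graph G(k) contains an independent set of cardinality n. -/
open SimpleGraph

/-- A packing `k`-coloring of `G`: colors in `{1,…,k}` and vertices of equal color `i`
are at distance greater than `i` (vertices in different components are unconstrained). -/
def IsPackingColoring {V : Type*} (G : SimpleGraph V) (k : ℕ) (c : V → ℕ) : Prop :=
  (∀ v, 1 ≤ c v ∧ c v ≤ k) ∧
  ∀ u v, u ≠ v → c u = c v → G.Reachable u v → c u < G.dist u v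

/-- A greedy packing `k`-coloring: a packing `k`-coloring that uses color `k` and in which
every vertex of color `i ≥ 2` has, for every `j < i`, a vertex of color `j`
at distance at most `j`. -/
def IsGreedyPackingColoring {V : Type*} (G : SimpleGraph V) (k : ℕ) (c : V → ℕ) : Prop :=
  IsPackingColoring G k c ∧ (∃ v, c v = k) ∧
  ∀ v, ∀ j, 1 ≤ j → j < c v → ∃ u, c u = j ∧ G.Reachable u v ∧ G.dist u v ≤ j

/-- The Grundy packing chromatic number: the largest `k` admitting a greedy packing
`k`-coloring. -/
noncomputable def grundyPackingChromaticNumber {V : Type*} (G : SimpleGraph V) : ℕ :=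
  sSup {k | ∃ c : V → ℕ, IsGreedyPackingColoring G k c}

/-- The packing chromatic number: the smallest `k` admitting a packing `k`-coloring. -/
noncomputable def packingChromaticNumber {V : Type*} (G : SimpleGraph V) : ℕ :=
  sInf {k | ∃ c : V → ℕ, IsPackingColoring G k c}

/-- `s` is an independent set of `G`. -/
def IsIndepFinset {V : Type*} (G : SimpleGraph V) (s : Finset V) : Prop :=
  ∀ u ∈ s, ∀ v ∈ s, ¬ G.Adj u v

/-- `s` is a maximal independent set of `G`. -/
def IsMaxIndepFinset {V : Type*} (G : SimpleGraph V) (s : Finset V) : Prop :=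
  IsIndepFinset G s ∧ ∀ t : Finset V, IsIndepFinset G t → s ⊆ t → s = t

/-- The independent domination number `i(G)`:
the minimum cardinality of a maximal independent set. -/
noncomputable def indepDomNum {V : Type*} (G : SimpleGraph V) [Fintype V] : ℕ :=
  sInf {n | ∃ s : Finset V, IsMaxIndepFinset G s ∧ s.card = n}

/-- The graph `G^ℓ`: same vertices, `u ∼ v` iff `u ≠ v` and `d_G(u,v) ≤ ℓ`. -/
def distPow {V : Type*} (G : SimpleGraph V) (ℓ : ℕ) : SimpleGraph V where
  Adj u v := u ≠ v ∧ G.dist u v ≤ ℓ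
  symm := by
    constructor
    rintro u v ⟨h1, h2⟩
    exact ⟨h1.symm, by rwa [SimpleGraph.dist_comm]⟩
  loopless := by constructor; rintro v ⟨h, _⟩; exact h rfl

/-- The graph `G(k)`: vertex set is `k` disjoint copies of `V(G)`, the copy `i : Fin k`
playing the role of `G^(i+1)`; the `k` copies of each vertex form a clique, and within the
`i`-th copy two distinct vertices are adjacent iff their distance in `G` is at most `i+1`. -/
def levelGraph {V : Type*} (G : SimpleGraph V) (k : ℕ) : SimpleGraph (V × Fin k) where
  Adj p q := (p.1 = q.1 ∧ p.2 ≠ q.2) ∨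
    (p.1 ≠ q.1 ∧ p.2 = q.2 ∧ G.dist p.1 q.1 ≤ (p.2 : ℕ) + 1)
  symm := by
    constructor
    rintro p q (⟨h1, h2⟩ | ⟨h1, h2, h3⟩)
    · exact Or.inl ⟨h1.symm, h2.symm⟩
    · refine Or.inr ⟨h1.symm, h2.symm, ?_⟩
      rw [SimpleGraph.dist_comm, ← h2]
      exact h3
  loopless := by constructor; rintro p (⟨_, h⟩ | ⟨h, _, _⟩) <;> exact h rfl

/-- `A` is a maximal independent set of the subgraph of `H` induced on `S`. -/
def IsMaxIndepSetOn {V : Type*} (H : SimpleGraph V) (S : Set V) (A : Set V) : Prop :=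
  A ⊆ S ∧ (∀ u ∈ A, ∀ v ∈ A, ¬ H.Adj u v) ∧
  ∀ B : Set V, B ⊆ S → (∀ u ∈ B, ∀ v ∈ B, ¬ H.Adj u v) → A ⊆ B → A = B

/-- The eccentricity of a vertex. -/
noncomputable def eccent {V : Type*} (G : SimpleGraph V) [Fintype V] (v : V) : ℕ :=
  Finset.univ.sup (fun u => G.dist v u)

/-- The radius of a graph. -/
noncomputable def graphRadius {V : Type*} (G : SimpleGraph V) [Fintype V] : ℕ :=
  sInf (Set.range (eccent G))

/-- The diameter of a graph. -/
noncomputable def graphDiam {V : Type*} (G : SimpleGraph V) [Fintype V] : ℕ :=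
  Finset.univ.sup (eccent G)

/-- The diametrical graph `D(G)`: `x ∼ y` iff `d_G(x,y) = diam(G)`. -/
noncomputable def diamGraph {V : Type*} (G : SimpleGraph V) [Fintype V] : SimpleGraph V where
  Adj u v := u ≠ v ∧ G.dist u v = graphDiam G
  symm := by
    constructor
    rintro u v ⟨h1, h2⟩
    exact ⟨h1.symm, by rwa [SimpleGraph.dist_comm]⟩
  loopless := by constructor; rintro v ⟨h, _⟩; exact h rfl

/-- `Q` is a clique of the subgraph of `H` induced on `S`. -/
def IsCliqueFinsetOn {V : Type*} (H : SimpleGraph V) (S : Set V) (Q : Finset V) : Prop :=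
  ↑Q ⊆ S ∧ ∀ u ∈ Q, ∀ v ∈ Q, u ≠ v → H.Adj u v

/-- `Q` is a maximal clique of the subgraph of `H` induced on `S`. -/
def IsMaxCliqueFinsetOn {V : Type*} (H : SimpleGraph V) (S : Set V) (Q : Finset V) : Prop :=
  IsCliqueFinsetOn H S Q ∧ ∀ R : Finset V, IsCliqueFinsetOn H S R → Q ⊆ R → Q = R

/-- The join `G ∨ H` of two graphs. -/
def joinGraph {V W : Type*} (G : SimpleGraph V) (H : SimpleGraph W) :
    SimpleGraph (V ⊕ W) where
  Adj p q := match p, q with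
    | .inl u, .inl v => G.Adj u v
    | .inr u, .inr v => H.Adj u v
    | .inl _, .inr _ => True
    | .inr _, .inl _ => True
  symm := by
    constructor
    rintro (u | u) (v | v) h
    · exact G.adj_symm h
    · trivial
    · trivial
    · exact H.adj_symm h
  loopless := by
    constructor
    rintro (u | u) h
    · exact G.irrefl h
    · exact H.irrefl h

/-- `K_{n,n}` minus a perfect matching: parts `{u_i}` and `{v_i}`, with `u_i ∼ v_j` iff
`i ≠ j`. -/
def completeBipartiteMinusMatching (n : ℕ) : SimpleGraph (Fin n ⊕ Fin n) where
  Adj p q := match p, q with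
    | .inl i, .inr j => i ≠ j
    | .inr i, .inl j => i ≠ j
    | _, _ => False
  symm := by constructor; rintro (i | i) (j | j) h <;> first | exact h.symm | exact h
  loopless := by constructor; rintro (i | i) h <;> exact h

/-! An independent set of `G(k)` meets each clique `{v} × Fin k` at most once, so one of size
`|V|` picks exactly one level for every vertex: it is the graph of a map `f : V → Fin k`.
Inside a level, independence says that vertices on level `i` are more than `i + 1` apart,
which is the packing condition for the coloring `v ↦ f v + 1`. -/

section

variable {V : Type*} {G : SimpleGraph V} {k : ℕ}

theorem levelGraph_adj_of_ne {u v : V} (huv : u ≠ v) {i j : Fin k} :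
    (levelGraph G k).Adj (u, i) (v, j) ↔ i = j ∧ G.dist u v ≤ i + 1 := by
  simp [levelGraph, huv]

theorem IsIndepFinset.injOn_fst {A : Finset (V × Fin k)}
    (hA : IsIndepFinset (levelGraph G k) A) : Set.InjOn Prod.fst (A : Set (V × Fin k)) := by
  rintro ⟨u, i⟩ hp ⟨v, j⟩ hq (rfl : u = v)
  by_contra hne
  exact hA _ hp _ hq (Or.inl ⟨rfl, fun hij => hne (congrArg (Prod.mk u) hij)⟩)

theorem IsPackingColoring.exists_eq_fin_succ {c : V → ℕ} (hc : IsPackingColoring G k c) :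
    ∃ f : V → Fin k, c = fun v => (f v : ℕ) + 1 :=
  ⟨fun v => ⟨c v - 1, by have := hc.1 v; omega⟩,
    funext fun v => by have := hc.1 v; dsimp only; omega⟩

variable [Fintype V]

def graphFinset {α : Type*} (f : V → α) : Finset (V × α) :=
  Finset.univ.map ⟨fun v => (v, f v), fun _ _ h => congrArg Prod.fst h⟩

theorem mem_graphFinset {α : Type*} {f : V → α} {v : V} {a : α} :
    (v, a) ∈ graphFinset f ↔ f v = a := by
  refine ⟨fun h => ?_, fun h => h ▸ Finset.mem_map_of_mem _ (Finset.mem_univ v)⟩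
  obtain ⟨w, -, hw⟩ := Finset.mem_map.1 h
  cases hw
  rfl

theorem card_graphFinset {α : Type*} (f : V → α) : (graphFinset f).card = Fintype.card V := by
  simp [graphFinset]

theorem IsIndepFinset.eq_graphFinset {A : Finset (V × Fin k)}
    (hA : IsIndepFinset (levelGraph G k) A) (hcard : A.card = Fintype.card V) :
    ∃ f : V → Fin k, A = graphFinset f := by
  classical
  have hfst : A.image Prod.fst = Finset.univ :=
    Finset.eq_univ_of_card _ (by rw [Finset.card_image_of_injOn hA.injOn_fst, hcard])
  have hcover : ∀ v : V, ∃ i : Fin k, (v, i) ∈ A := fun v => by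
    obtain ⟨p, hp, rfl⟩ := Finset.mem_image.1 (hfst ▸ Finset.mem_univ v)
    exact ⟨p.2, hp⟩
  choose f hf using hcover
  refine ⟨f, (Finset.eq_of_subset_of_card_le ?_ (by rw [hcard, card_graphFinset])).symm⟩
  rintro ⟨v, i⟩ hv
  obtain rfl : f v = i := mem_graphFinset.1 hv
  exact hf v

theorem isIndepFinset_graphFinset_iff (hG : G.Preconnected) (f : V → Fin k) :
    IsIndepFinset (levelGraph G k) (graphFinset f) ↔
      IsPackingColoring G k (fun v => (f v : ℕ) + 1) := by
  constructor
  · intro hA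
    refine ⟨fun v => ⟨Nat.le_add_left 1 _, (f v).isLt⟩, fun u v huv hcol _ => ?_⟩
    by_contra! hle
    have hfuv : f u = f v := Fin.ext (Nat.succ_injective hcol)
    exact hA _ (mem_graphFinset.2 rfl) _ (mem_graphFinset.2 rfl)
      ((levelGraph_adj_of_ne huv).2 ⟨hfuv, hle⟩)
  · rintro ⟨-, hpack⟩ ⟨u, i⟩ hu ⟨v, j⟩ hv hadj
    obtain rfl : f u = i := mem_graphFinset.1 hu
    obtain rfl : f v = j := mem_graphFinset.1 hv
    by_cases huv : u = v
    · subst huv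
      exact hadj.ne rfl
    obtain ⟨hfuv, hle⟩ := (levelGraph_adj_of_ne huv).1 hadj
    -- `levelGraph` sees unreachable pairs (junk distance `0`) as adjacent, hence `hG`.
    have hlt : (f u : ℕ) + 1 < G.dist u v := hpack u v huv (by simp only [hfuv]) (hG u v)
    omega

end

theorem packingColoring_iff_indepSet_levelGraph_general {V : Type*} [Fintype V] (G : SimpleGraph V)
    (hG : G.Connected) (k : ℕ) :
    (∃ c : V → ℕ, IsPackingColoring G k c) ↔
    ∃ A : Finset (V × Fin k), IsIndepFinset (levelGraph G k) A ∧
      A.card = Fintype.card V := by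
  constructor
  · rintro ⟨c, hc⟩
    obtain ⟨f, rfl⟩ := hc.exists_eq_fin_succ
    exact ⟨graphFinset f, (isIndepFinset_graphFinset_iff hG.preconnected f).2 hc,
      card_graphFinset f⟩
  · rintro ⟨A, hA, hcard⟩
    obtain ⟨f, rfl⟩ := hA.eq_graphFinset hcard
    exact ⟨_, (isIndepFinset_graphFinset_iff hG.preconnected f).1 hA⟩

/-- For a connected graph `G` on `n` vertices and `k ∈ {1,…,n}`,
`G` admits a packing `k`-coloring iff `G(k)` contains an independent set of cardinality `n`. -/
theorem packingColoring_iff_indepSet_levelGraph {V : Type*} [Fintype V] (G : SimpleGraph V)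
    (hG : G.Connected) (k : ℕ) (hk1 : 1 ≤ k) (hk2 : k ≤ Fintype.card V) :
    (∃ c : V → ℕ, IsPackingColoring G k c) ↔
    ∃ A : Finset (V × Fin k), IsIndepFinset (levelGraph G k) A ∧
      A.card = Fintype.card V :=
  packingColoring_iff_indepSet_levelGraph_general G hG k
end

section
/- For every connected graph G on n vertices, Γρ(G) ≤ n − i(G) + 1. -/
open SimpleGraph

open Finset

section

variable {V : Type*} {G : SimpleGraph V} {k : ℕ} {c : V → ℕ}

theorem indepDomNum_le_card [Fintype V] {s : Finset V} (hs : IsMaxIndepFinset G s) :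
    indepDomNum G ≤ #s :=
  Nat.sInf_le ⟨s, hs, rfl⟩

namespace IsPackingColoring

theorem not_adj_of_eq_one (hc : IsPackingColoring G k c) {u v : V} (hu : c u = 1)
    (hv : c v = 1) : ¬ G.Adj u v := by
  intro hadj
  have := hc.2 u v hadj.ne (hu.trans hv.symm) hadj.reachable
  rw [hu, dist_eq_one_iff_adj.2 hadj] at this
  exact this.false

end IsPackingColoring

namespace IsGreedyPackingColoring

theorem exists_adj_eq_one (hc : IsGreedyPackingColoring G k c) {v : V} (hv : c v ≠ 1) :
    ∃ u, c u = 1 ∧ G.Adj u v := by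
  obtain ⟨u, hu, hreach, hdist⟩ := hc.2.2 v 1 le_rfl (by have := (hc.1.1 v).1; omega)
  have hne : u ≠ v := by rintro rfl; exact hv hu
  exact ⟨u, hu, dist_eq_one_iff_adj.1 (le_antisymm hdist (hreach.pos_dist_of_ne hne))⟩

theorem isMaxIndepFinset_filter_eq_one [Fintype V] (hc : IsGreedyPackingColoring G k c) :
    IsMaxIndepFinset G (univ.filter (c · = 1)) := by
  have hmem : ∀ v, v ∈ univ.filter (c · = 1) ↔ c v = 1 := by simp
  refine ⟨fun u hu v hv => hc.1.not_adj_of_eq_one ((hmem u).1 hu) ((hmem v).1 hv), ?_⟩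
  intro t ht hst
  refine hst.antisymm fun v hv => (hmem v).2 ?_
  by_contra hv1
  obtain ⟨u, hu, hadj⟩ := hc.exists_adj_eq_one hv1
  exact ht u (hst ((hmem u).2 hu)) v hv hadj

theorem exists_eq_of_le (hc : IsGreedyPackingColoring G k c) {j : ℕ} (hj : 1 ≤ j)
    (hjk : j ≤ k) : ∃ u, c u = j := by
  obtain ⟨v, hv⟩ := hc.2.1
  obtain rfl | hlt := hjk.eq_or_lt
  · exact ⟨v, hv⟩
  · obtain ⟨u, hu, -⟩ := hc.2.2 v j hj (hv ▸ hlt)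
    exact ⟨u, hu⟩

theorem sub_one_le_card_filter_ne_one [Fintype V] (hc : IsGreedyPackingColoring G k c) :
    k - 1 ≤ #(univ.filter (c · ≠ 1)) :=
  calc k - 1 = #(Icc 2 k) := by simp
    _ ≤ #((univ.filter (c · ≠ 1)).image c) := card_le_card fun j hj => by
        obtain ⟨hj2, hjk⟩ := mem_Icc.1 hj
        obtain ⟨u, hu⟩ := hc.exists_eq_of_le (by omega) hjk
        exact mem_image.2 ⟨u, by simp only [mem_filter, mem_univ, true_and, hu]; omega, hu⟩
    _ ≤ #(univ.filter (c · ≠ 1)) := card_image_le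

/-- Color class `1` is a maximal independent set, and the `k - 1` other colors each need
a vertex of their own outside it. -/
theorem le_card_sub_indepDomNum_add_one [Fintype V] (hc : IsGreedyPackingColoring G k c) :
    k ≤ Fintype.card V - indepDomNum G + 1 := by
  have hS := indepDomNum_le_card hc.isMaxIndepFinset_filter_eq_one
  have hT := hc.sub_one_le_card_filter_ne_one
  have hsplit := card_filter_add_card_filter_not (s := univ) (c · = 1)
  rw [card_univ] at hsplit
  simp only [ne_eq] at hT
  omega

end IsGreedyPackingColoring

end

theorem grundyPackingChromaticNumber_le_general {V : Type*} [Fintype V] (G : SimpleGraph V) :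
    grundyPackingChromaticNumber G ≤ Fintype.card V - indepDomNum G + 1 :=
  csSup_le' fun _ ⟨_, hc⟩ => hc.le_card_sub_indepDomNum_add_one

/-- For every connected graph `G` on `n` vertices,
`Γρ(G) ≤ n - i(G) + 1`. -/
theorem grundyPackingChromaticNumber_le {V : Type*} [Fintype V] (G : SimpleGraph V)
    (hG : G.Connected) :
    grundyPackingChromaticNumber G ≤ Fintype.card V - indepDomNum G + 1 :=
  grundyPackingChromaticNumber_le_general G
end

section
/- A disconnected graph G on n vertices satisfies Γρ(G) = n − 1 if and only if G is the disjoint union of K_1 and a graph G' that has a universal vertex (a vertex adjacent to all other vertices of G'). -/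
open SimpleGraph

/-
In a greedy packing `k`-coloring every color `1, …, k` already occurs in the component of a
vertex of color `k`, so that component has at least `k` vertices; a disconnected graph thus has
`Γρ(G) ≤ n - 1`. Equality forces a component on `n - 1` vertices, colored bijectively by
`1, …, n - 1`, plus an isolated vertex; as every vertex of color at least `2` has a neighbor of
color `1`, the unique vertex of color `1` in the big component is universal there. Conversely,
giving the universal vertex and the isolated vertex color `1` and the remaining `n - 2` vertices
the distinct colors `2, …, n - 1` is greedy: any two of them are at distance at most `2` through
the universal vertex.
-/

open Finset

namespace IsGreedyPackingColoring

variable {V : Type*} {G : SimpleGraph V} {k : ℕ} {c : V → ℕ}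

lemma exists_reachable (hc : IsGreedyPackingColoring G k c) {z : V} (hz : c z = k) {j : ℕ}
    (hj : 1 ≤ j) (hjk : j ≤ k) : ∃ u, c u = j ∧ G.Reachable u z := by
  rcases hjk.lt_or_eq with hlt | rfl
  · obtain ⟨u, hu, hreach, -⟩ := hc.2.2 z j hj (hz ▸ hlt)
    exact ⟨u, hu, hreach⟩
  · exact ⟨z, hz, .rfl⟩

lemma exists_adj_of_two_le (hc : IsGreedyPackingColoring G k c) {v : V} (hv : 2 ≤ c v) :
    ∃ u, c u = 1 ∧ G.Adj u v := by
  obtain ⟨u, hu, hreach, hdist⟩ := hc.2.2 v 1 le_rfl hv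
  have hne : u ≠ v := by rintro rfl; omega
  have hpos : G.dist u v ≠ 0 := fun h => hne (hreach.dist_eq_zero_iff.mp h)
  exact ⟨u, hu, SimpleGraph.dist_eq_one_iff_adj.mp (by omega)⟩

variable [Fintype V] [DecidableRel G.Reachable]

lemma Icc_subset_image_reachable (hc : IsGreedyPackingColoring G k c) {z : V} (hz : c z = k) :
    Icc 1 k ⊆ ({u | G.Reachable u z} : Finset V).image c := by
  intro j hj
  rw [mem_Icc] at hj
  obtain ⟨u, hu, hreach⟩ := hc.exists_reachable hz hj.1 hj.2
  exact mem_image.mpr ⟨u, mem_filter.mpr ⟨mem_univ u, hreach⟩, hu⟩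

lemma le_card_reachable (hc : IsGreedyPackingColoring G k c) {z : V} (hz : c z = k) :
    k ≤ #{u | G.Reachable u z} := by
  simpa using (card_le_card (hc.Icc_subset_image_reachable hz)).trans card_image_le

lemma injOn_reachable (hc : IsGreedyPackingColoring G k c) {z : V} (hz : c z = k)
    (hcard : #{u | G.Reachable u z} ≤ k) : Set.InjOn c ({u | G.Reachable u z} : Finset V) := by
  have hIcc := card_le_card (hc.Icc_subset_image_reachable hz)
  rw [Nat.card_Icc] at hIcc
  exact card_image_iff.mp (card_image_le.antisymm (by omega))

end IsGreedyPackingColoring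

section

variable {V : Type*} {G : SimpleGraph V}

lemma SimpleGraph.exists_not_reachable_of_not_connected (h : ¬ G.Connected)
    (z : V) : ∃ v, ¬ G.Reachable v z := by
  by_contra! hreach
  exact h (G.connected_iff_exists_forall_reachable.mpr ⟨z, fun v => (hreach v).symm⟩)

lemma SimpleGraph.one_lt_card_of_not_connected [Fintype V] [Nonempty V] (h : ¬ G.Connected) :
    1 < Fintype.card V := by
  by_contra! hcard
  have : Subsingleton V := Fintype.card_le_one_iff_subsingleton.mp hcard
  exact h .of_subsingleton

lemma IsGreedyPackingColoring.le_card [Fintype V] {k : ℕ} {c : V → ℕ}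
    (hc : IsGreedyPackingColoring G k c) : k ≤ Fintype.card V := by
  classical
  obtain ⟨z, hz⟩ := hc.2.1
  exact (hc.le_card_reachable hz).trans (card_le_univ _)

lemma IsGreedyPackingColoring.le_card_sub_one_of_not_connected [Fintype V]
    (hdisc : ¬ G.Connected) {k : ℕ} {c : V → ℕ} (hc : IsGreedyPackingColoring G k c) :
    k ≤ Fintype.card V - 1 := by
  classical
  obtain ⟨z, hz⟩ := hc.2.1
  obtain ⟨v, hv⟩ := SimpleGraph.exists_not_reachable_of_not_connected hdisc z
  have hlt : #{u | G.Reachable u z} < Fintype.card V :=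
    card_lt_univ_of_notMem (x := v) (by simpa using hv)
  have := hc.le_card_reachable hz
  omega

lemma bddAbove_setOf_isGreedyPackingColoring [Fintype V] :
    BddAbove {k | ∃ c : V → ℕ, IsGreedyPackingColoring G k c} :=
  ⟨Fintype.card V, fun _ ⟨_, hc⟩ => hc.le_card⟩

lemma IsGreedyPackingColoring.le_grundyPackingChromaticNumber [Fintype V] {k : ℕ} {c : V → ℕ}
    (hc : IsGreedyPackingColoring G k c) : k ≤ grundyPackingChromaticNumber G :=
  le_csSup bddAbove_setOf_isGreedyPackingColoring ⟨c, hc⟩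

lemma exists_isGreedyPackingColoring_of_grundyPackingChromaticNumber_eq [Fintype V] {k : ℕ}
    (h : grundyPackingChromaticNumber G = k) (hk : k ≠ 0) :
    ∃ c, IsGreedyPackingColoring G k c := by
  have hne : {k | ∃ c : V → ℕ, IsGreedyPackingColoring G k c}.Nonempty := by
    by_contra hempty
    rw [Set.not_nonempty_iff_eq_empty] at hempty
    simp [grundyPackingChromaticNumber, hempty] at h
    omega
  exact h ▸ Nat.sSup_mem hne bddAbove_setOf_isGreedyPackingColoring

lemma grundyPackingChromaticNumber_le_card_sub_one_of_not_connected [Fintype V]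
    (hdisc : ¬ G.Connected) : grundyPackingChromaticNumber G ≤ Fintype.card V - 1 :=
  csSup_le' fun _ ⟨_, hc⟩ => hc.le_card_sub_one_of_not_connected hdisc

lemma isGreedyPackingColoring_of_forall_adj {k : ℕ} {c : V → ℕ} {w : V}
    (hrange : ∀ v, 1 ≤ c v ∧ c v ≤ k) (hsurj : ∀ j, 1 ≤ j → j ≤ k → ∃ v, c v = j)
    (hinj : ∀ u v, G.Reachable u v → c u = c v → u = v) (hw : c w = 1)
    (hadj : ∀ v, 2 ≤ c v → G.Adj w v) : IsGreedyPackingColoring G k c := by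
  refine ⟨⟨hrange, fun u v huv hcuv hreach => absurd (hinj u v hreach hcuv) huv⟩,
    hsurj k ((hrange w).1.trans (hrange w).2) le_rfl, ?_⟩
  intro v j hj hjv
  have hwv := hadj v (by omega)
  rcases hj.lt_or_eq with hj | rfl
  · obtain ⟨u, hu⟩ := hsurj j hj.le ((hjv.trans_le (hrange v).2).le)
    have hwu := hadj u (by omega)
    refine ⟨u, hu, hwu.reachable.symm.trans hwv.reachable, ?_⟩
    calc G.dist u v ≤ G.dist u w + G.dist w v := hwu.reachable.symm.dist_triangle_left v
      _ = 2 := by rw [G.dist_comm, SimpleGraph.dist_eq_one_iff_adj.mpr hwu,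
          SimpleGraph.dist_eq_one_iff_adj.mpr hwv]
      _ ≤ j := hj
  · exact ⟨w, hw, hwv.reachable, (SimpleGraph.dist_eq_one_iff_adj.mpr hwv).le⟩

lemma exists_isGreedyPackingColoring_card_sub_one_of_isolated [Fintype V] {v₀ w : V}
    (hv₀ : ∀ u, ¬ G.Adj v₀ u) (hw : w ≠ v₀) (hwu : ∀ u, u ≠ w → u ≠ v₀ → G.Adj w u) :
    ∃ c, IsGreedyPackingColoring G (Fintype.card V - 1) c := by
  classical
  have hn : 2 ≤ Fintype.card V := Fintype.one_lt_card_iff.mpr ⟨w, v₀, hw⟩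
  set s : Finset V := univ \ {v₀, w}
  have hmem : ∀ v, v ∈ s ↔ v ≠ v₀ ∧ v ≠ w := by simp [s]
  have hs : #s = Fintype.card V - 2 := by
    rw [card_sdiff_of_subset (subset_univ _), card_univ, card_pair hw.symm]
  let e := s.equivFin
  let c : V → ℕ := fun v => if h : v ∈ s then e ⟨v, h⟩ + 2 else 1
  have hc_mem : ∀ v (h : v ∈ s), c v = e ⟨v, h⟩ + 2 := fun v h => dif_pos h
  have hc_not_mem : ∀ v, v ∉ s → c v = 1 := fun v h => dif_neg h
  have hw_not_mem : w ∉ s := by simp [hmem]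
  have hv₀_unreachable : ∀ u, u ≠ v₀ → ¬ G.Reachable v₀ u := fun u hu =>
    not_reachable_of_neighborSet_left_eq_empty hu.symm (Set.eq_empty_of_forall_notMem hv₀)
  refine ⟨c, isGreedyPackingColoring_of_forall_adj (w := w) ?range ?surj ?inj
    (hc_not_mem w hw_not_mem) ?adj⟩
  case range =>
    intro v
    by_cases h : v ∈ s
    · have := (e ⟨v, h⟩).isLt
      rw [hc_mem v h]
      omega
    · rw [hc_not_mem v h]
      omega
  case surj =>
    intro j hj hjn
    rcases hj.eq_or_lt with rfl | hj
    · exact ⟨w, hc_not_mem w hw_not_mem⟩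
    · refine ⟨e.symm ⟨j - 2, by omega⟩, ?_⟩
      rw [hc_mem _ (e.symm _).2, Subtype.coe_eta, Equiv.apply_symm_apply, Fin.val_mk]
      omega
  case inj =>
    intro u v huv hcuv
    by_cases hu : u ∈ s <;> by_cases hv : v ∈ s
    · rw [hc_mem u hu, hc_mem v hv] at hcuv
      have : (⟨u, hu⟩ : s) = ⟨v, hv⟩ := e.injective (Fin.ext (by omega))
      exact congrArg Subtype.val this
    · rw [hc_mem u hu, hc_not_mem v hv] at hcuv
      omega
    · rw [hc_not_mem u hu, hc_mem v hv] at hcuv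
      omega
    · simp only [hmem, not_and_or, not_not] at hu hv
      rcases hu with rfl | rfl <;> rcases hv with rfl | rfl
      all_goals first
        | rfl
        | exact absurd huv (hv₀_unreachable _ hw)
        | exact absurd huv.symm (hv₀_unreachable _ hw)
  case adj =>
    intro v hv
    have hvs : v ∈ s := by
      by_contra h
      rw [hc_not_mem v h] at hv
      omega
    obtain ⟨hv₀, hvw⟩ := (hmem v).mp hvs
    exact hwu v hvw hv₀

lemma IsGreedyPackingColoring.exists_isolated_and_universal [Fintype V]
    (hdisc : ¬ G.Connected) {c : V → ℕ} (hc : IsGreedyPackingColoring G (Fintype.card V - 1) c) :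
    ∃ v₀, (∀ u, ¬ G.Adj v₀ u) ∧ ∃ w, w ≠ v₀ ∧ ∀ u, u ≠ w → u ≠ v₀ → G.Adj w u := by
  classical
  obtain ⟨z, hz⟩ := hc.2.1
  obtain ⟨v₀, hv₀⟩ := SimpleGraph.exists_not_reachable_of_not_connected hdisc z
  have hzv₀ : z ≠ v₀ := by
    rintro rfl
    exact hv₀ .rfl
  have hSeq : ({u | G.Reachable u z} : Finset V) = univ.erase v₀ := by
    refine eq_of_subset_of_card_le (fun u hu => mem_erase.mpr ⟨?_, mem_univ u⟩) ?_
    · rintro rfl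
      exact hv₀ (mem_filter.mp hu).2
    · rw [card_erase_of_mem (mem_univ v₀), card_univ]
      exact hc.le_card_reachable hz
  have hreach : ∀ u, u ≠ v₀ → G.Reachable u z := fun u hu => by
    have hu : u ∈ univ.erase v₀ := mem_erase.mpr ⟨hu, mem_univ u⟩
    simpa [← hSeq] using hu
  have hinj : ∀ u v, G.Reachable u z → G.Reachable v z → c u = c v → u = v := by
    refine fun u v hu hv => hc.injOn_reachable hz ?_ (by simpa using hu) (by simpa using hv)
    rw [hSeq, card_erase_of_mem (mem_univ v₀), card_univ]
  have hisolated : ∀ u, ¬ G.Adj v₀ u := fun u hadj =>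
    hv₀ (hadj.reachable.trans (hreach u hadj.ne.symm))
  have hn : 2 ≤ Fintype.card V := Fintype.one_lt_card_iff.mpr ⟨z, v₀, hzv₀⟩
  obtain ⟨w, hwz, hw⟩ : ∃ w, G.Reachable w z ∧ c w = 1 := by
    simpa using hc.Icc_subset_image_reachable hz (mem_Icc.mpr ⟨le_rfl, by omega⟩)
  refine ⟨v₀, hisolated, w, ?_, fun u huw huv₀ => ?_⟩
  · rintro rfl
    exact hv₀ hwz
  have hcu : 2 ≤ c u := by
    have := (hc.1.1 u).1
    have : c u ≠ 1 := fun h => huw (hinj u w (hreach u huv₀) hwz (h.trans hw.symm))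
    omega
  obtain ⟨p, hp, hpu⟩ := hc.exists_adj_of_two_le hcu
  have hpw : p = w := hinj p w (hpu.reachable.trans (hreach u huv₀)) hwz (hp.trans hw.symm)
  exact hpw ▸ hpu

end

/-- A disconnected graph `G` on `n` vertices satisfies `Γρ(G) = n - 1` iff
`G` is the disjoint union of `K₁` (an isolated vertex) and a graph `G'` having a universal
vertex. -/
theorem grundyPackingChromaticNumber_eq_card_sub_one_iff_of_disconnected {V : Type*}
    [Fintype V] [Nonempty V] (G : SimpleGraph V) (hdisc : ¬ G.Connected) :
    grundyPackingChromaticNumber G = Fintype.card V - 1 ↔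
    ∃ v₀ : V, (∀ u : V, ¬ G.Adj v₀ u) ∧
      ∃ w : V, w ≠ v₀ ∧ ∀ u : V, u ≠ w → u ≠ v₀ → G.Adj w u := by
  constructor
  · intro h
    have hn := SimpleGraph.one_lt_card_of_not_connected hdisc
    obtain ⟨c, hc⟩ := exists_isGreedyPackingColoring_of_grundyPackingChromaticNumber_eq h
      (by omega)
    exact hc.exists_isolated_and_universal hdisc
  · rintro ⟨v₀, hv₀, w, hw, hwu⟩
    obtain ⟨c, hc⟩ := exists_isGreedyPackingColoring_card_sub_one_of_isolated hv₀ hw hwu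
    exact (grundyPackingChromaticNumber_le_card_sub_one_of_not_connected hdisc).antisymm
      hc.le_grundyPackingChromaticNumber
end

section
/- If G is a connected graph with i(G) = 2, then rad(G) ∈ {2,3} and diam(G) ∈ {2,3,4,5}. -/
open SimpleGraph

/-!
A maximal independent set `{a, b}` dominates `G`, so every vertex lies within distance `1` of `a`
or of `b`. If `d(a, b) ≥ 4`, the vertex at distance `2` from `a` on a geodesic to `b` would be
at distance at least `2` from both, hence `d(a, b) ≤ 3`; this gives `diam(G) ≤ 1 + 3 + 1` and a vertex next
to `a` of eccentricity at most `3`. Since `i(G) ≠ 1`, no vertex is adjacent to all others, so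
every eccentricity is at least `2`. The geodesic argument works verbatim for vertices within
distance `r` of `a` or `b`, giving `d(a, b) ≤ 2r + 1`, `rad(G) ≤ 2r + 1` and `diam(G) ≤ 4r + 1`.
-/

namespace SimpleGraph

variable {V : Type*} {G : SimpleGraph V}

lemma Connected.exists_dist_eq_of_le_dist (hG : G.Connected) {a b : V} {k : ℕ}
    (hk : k ≤ G.dist a b) : ∃ x, G.dist a x = k ∧ G.dist x b = G.dist a b - k := by
  obtain ⟨p, hp⟩ := hG.exists_walk_length_eq_dist a b
  have hax : G.dist a (p.getVert k) ≤ k :=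
    (dist_le (p.take k)).trans (by simp [Walk.take_length])
  have hxb : G.dist (p.getVert k) b ≤ G.dist a b - k :=
    (dist_le (p.drop k)).trans (by simp [Walk.drop_length, hp])
  have := hG.dist_triangle (u := a) (v := p.getVert k) (w := b)
  exact ⟨p.getVert k, by omega, by omega⟩

lemma Connected.dist_le_dist_add_dist (hG : G.Connected) (x u v : V) :
    G.dist u v ≤ G.dist x u + G.dist x v := by
  rw [dist_comm (u := x) (v := u)]
  exact hG.dist_triangle

lemma Connected.dist_le_of_forall_dist_le_or (hG : G.Connected) {a b : V} {r : ℕ}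
    (h : ∀ v, G.dist a v ≤ r ∨ G.dist b v ≤ r) : G.dist a b ≤ 2 * r + 1 := by
  by_contra! hlt
  obtain ⟨x, hax, hxb⟩ := hG.exists_dist_eq_of_le_dist (a := a) (b := b) (k := r + 1) (by omega)
  rw [dist_comm] at hxb
  have := h x
  omega

end SimpleGraph

section

variable {V : Type*} {G : SimpleGraph V}

lemma IsMaxIndepFinset.exists_dist_le_one {s : Finset V} (hs : IsMaxIndepFinset G s) (v : V) :
    ∃ u ∈ s, G.dist u v ≤ 1 := by
  classical
  by_contra! hfar
  have hnadj : ∀ u ∈ s, ¬ G.Adj u v := fun u hu hadj =>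
    (hfar u hu).ne' (dist_eq_one_iff_adj.2 hadj)
  have hind : IsIndepFinset G (insert v s) := by
    intro x hx y hy
    rcases Finset.mem_insert.1 hx with rfl | hxs <;> rcases Finset.mem_insert.1 hy with rfl | hys
    · exact G.irrefl
    · exact fun hadj => hnadj y hys hadj.symm
    · exact hnadj x hxs
    · exact hs.1 x hxs y hys
  have hv : v ∈ s := (hs.2 _ hind (Finset.subset_insert v s)) ▸ Finset.mem_insert_self v s
  simpa using hfar v hv

variable [Fintype V]

lemma exists_isMaxIndepFinset_card_eq_indepDomNum (h : indepDomNum G ≠ 0) :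
    ∃ s, IsMaxIndepFinset G s ∧ s.card = indepDomNum G :=
  Nat.sInf_mem (Nat.nonempty_of_pos_sInf (Nat.pos_of_ne_zero h))

lemma indepDomNum_le_one_of_forall_adj {v : V} (hv : ∀ u, u ≠ v → G.Adj v u) :
    indepDomNum G ≤ 1 := by
  refine Nat.sInf_le ⟨{v}, ⟨by simp [IsIndepFinset], fun t ht hvt => ?_⟩, Finset.card_singleton v⟩
  refine hvt.antisymm fun u hu => Finset.mem_singleton.2 ?_
  by_contra hne
  exact ht v (hvt (Finset.mem_singleton_self v)) u hu (hv u hne)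

lemma dist_le_eccent (v u : V) : G.dist v u ≤ _root_.eccent G v :=
  Finset.le_sup (Finset.mem_univ u)

lemma eccent_le_iff_forall_dist_le {v : V} {n : ℕ} : _root_.eccent G v ≤ n ↔ ∀ u, G.dist v u ≤ n := by
  simp [_root_.eccent]

lemma graphDiam_le_iff {n : ℕ} : graphDiam G ≤ n ↔ ∀ u v, G.dist u v ≤ n := by
  simp [graphDiam, eccent_le_iff_forall_dist_le]

lemma graphRadius_le_eccent (v : V) : graphRadius G ≤ _root_.eccent G v :=
  Nat.sInf_le ⟨v, rfl⟩

lemma exists_eccent_eq_graphRadius [Nonempty V] : ∃ v, _root_.eccent G v = graphRadius G :=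
  Nat.sInf_mem (Set.range_nonempty _)

lemma graphRadius_le_graphDiam [Nonempty V] : graphRadius G ≤ graphDiam G :=
  (graphRadius_le_eccent (Classical.arbitrary V)).trans (Finset.le_sup (Finset.mem_univ _))

lemma two_le_graphRadius (hG : G.Connected) (hi : 1 < indepDomNum G) : 2 ≤ graphRadius G := by
  have := hG.nonempty
  obtain ⟨v, hv⟩ := exists_eccent_eq_graphRadius (G := G)
  obtain ⟨u, huv, hnadj⟩ : ∃ u, u ≠ v ∧ ¬ G.Adj v u := by
    by_contra! h
    exact (indepDomNum_le_one_of_forall_adj h).not_gt hi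
  exact hv ▸ (hG.one_lt_dist_of_ne_of_not_adj huv.symm hnadj).trans_le (dist_le_eccent v u)

lemma graphRadius_le_of_forall_dist_le_or (hG : G.Connected) {a b : V} {r : ℕ}
    (h : ∀ v, G.dist a v ≤ r ∨ G.dist b v ≤ r) : graphRadius G ≤ 2 * r + 1 := by
  have hab := hG.dist_le_of_forall_dist_le_or h
  obtain ⟨x, hax, hxb⟩ := hG.exists_dist_eq_of_le_dist (min_le_right r (G.dist a b))
  refine (graphRadius_le_eccent x).trans (eccent_le_iff_forall_dist_le.2 fun u => ?_)
  have hxa := hG.dist_le_dist_add_dist a x u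
  have hxb' := hG.dist_triangle (u := x) (v := b) (w := u)
  rcases h u with hu | hu <;> omega

lemma graphDiam_le_of_forall_dist_le_or (hG : G.Connected) {a b : V} {r : ℕ}
    (h : ∀ v, G.dist a v ≤ r ∨ G.dist b v ≤ r) : graphDiam G ≤ 4 * r + 1 := by
  have hab := hG.dist_le_of_forall_dist_le_or h
  refine graphDiam_le_iff.2 fun u v => ?_
  have hua := hG.dist_le_dist_add_dist a u v
  have hub := hG.dist_le_dist_add_dist b u v
  have hav := hG.dist_triangle (u := a) (v := b) (w := v)
  have hbv := hG.dist_triangle (u := b) (v := a) (w := v)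
  have hba : G.dist b a = G.dist a b := dist_comm
  rcases h u with hu | hu <;> rcases h v with hv | hv <;> omega

end

/-- If `G` is connected with `i(G) = 2`, then `rad(G) ∈ {2,3}` and
`diam(G) ∈ {2,3,4,5}`. -/
theorem radius_diam_of_indepDomNum_eq_two {V : Type*} [Fintype V] (G : SimpleGraph V)
    (hG : G.Connected) (hi : indepDomNum G = 2) :
    graphRadius G ∈ ({2, 3} : Set ℕ) ∧ graphDiam G ∈ ({2, 3, 4, 5} : Set ℕ) := by
  classical
  obtain ⟨s, hs, hcard⟩ := exists_isMaxIndepFinset_card_eq_indepDomNum (hi.trans_ne two_ne_zero)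
  obtain ⟨a, b, -, rfl⟩ := Finset.card_eq_two.1 (hcard.trans hi)
  have hdom : ∀ v, G.dist a v ≤ 1 ∨ G.dist b v ≤ 1 := fun v => by
    simpa using hs.exists_dist_le_one v
  have := hG.nonempty
  have hrad_ge := two_le_graphRadius hG (by omega)
  have hrad_le := graphRadius_le_of_forall_dist_le_or hG hdom
  have hdiam_le := graphDiam_le_of_forall_dist_le_or hG hdom
  have hrad_diam := graphRadius_le_graphDiam (G := G)
  simp only [Set.mem_insert_iff, Set.mem_singleton_iff]
  omega
end
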